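/- (Hyperbolic CS decomposition, real) Let n = p + q with p ≥ q. Any indefinite orthogonal matrix G (Gᵀ I_{p,q} G = I_{p,q}) can be written as G = diag(O_p, O_q) · M · diag(O_p', O_q') where O_p, O_p' ∈ O(p), O_q, O_q' ∈ O(q), and M = [[Ch, 0, Sh], [0, I_{p−q}, 0], [Sh, 0, Ch]] with Ch = diag(cosh θ_l), Sh = diag(sinh θ_l) for real numbers θ_1, …, θ_q. -/

import Mathlib

/-!
Write `G = [[A, B], [C, D]]` with `D` of size `q`, and `J = I_{p,q}`. The relation `Gᵀ J G = J`
and its dual `G J Gᵀ = J` give `DᵀD = 1 + BᵀB` and `DDᵀ = 1 + CCᵀ`. Diagonalising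
`BᵀB = Vᵀ Sh² V`, the matrices `D` and `Cᵀ` have the Gram matrices of `Ch V` and `S Uᵀ`
(`S` the sinh block of `M`), so they differ from these by orthogonal factors: the bottom block row
of `G` is `Oq` times that of `K = M · diag(Op', Oq')`. As `G` and `K` both preserve `J`, the Gram
matrix of the top block row is determined by the bottom one, so the top rows also differ by an
orthogonal factor `Op`.

Each step uses that matrices with equal Gram matrices `EᵀE = FᵀF` differ by an orthogonal left
factor.
-/

open Matrix

namespace Matrix

section Gram

variable {𝕜 m n : Type*} [RCLike 𝕜] [Fintype m] [DecidableEq m] [Fintype n] [DecidableEq n]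

/-- `F x ↦ E x` is a well-defined isometry on the range of `F`, and it extends to the whole
space. -/
theorem exists_unitary_mul_eq_of_conjTranspose_mul_self_eq {E F : Matrix m n 𝕜}
    (h : Eᴴ * E = Fᴴ * F) : ∃ O : Matrix m m 𝕜, Oᴴ * O = 1 ∧ E = O * F := by
  set e := toEuclideanLin E
  set f := toEuclideanLin F
  have hgram : e.adjoint ∘ₗ e = f.adjoint ∘ₗ f := by
    simpa [e, f, ← toEuclideanLin_conjTranspose_eq_adjoint] using congrArg toEuclideanLin h
  have hnorm (x) : ‖e x‖ = ‖f x‖ := by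
    have hinner : inner 𝕜 (e x) (e x) = inner 𝕜 (f x) (f x) := by
      rw [← LinearMap.adjoint_inner_left, ← LinearMap.adjoint_inner_left]
      exact congr(inner 𝕜 ($hgram x) x)
    rw [inner_self_eq_norm_sq_to_K, inner_self_eq_norm_sq_to_K] at hinner
    exact (sq_eq_sq₀ (norm_nonneg _) (norm_nonneg _)).mp (by exact_mod_cast hinner)
  have hker : LinearMap.ker f ≤ LinearMap.ker e := fun x hx => by
    rw [LinearMap.mem_ker, ← norm_eq_zero, hnorm, norm_eq_zero]
    exact hx
  let L₀ : LinearMap.range f →ₗ[𝕜] EuclideanSpace 𝕜 m :=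
    (LinearMap.ker f).liftQ e hker ∘ₗ f.quotKerEquivRange.symm.toLinearMap
  have hL₀ (x) : L₀ ⟨f x, LinearMap.mem_range_self f x⟩ = e x := by
    simp [L₀, LinearMap.quotKerEquivRange_symm_apply_image]
  let L : LinearMap.range f →ₗᵢ[𝕜] EuclideanSpace 𝕜 m :=
    { L₀ with norm_map' := by rintro ⟨_, x, rfl⟩; simp [hL₀, hnorm] }
  refine ⟨toEuclideanLin.symm L.extend.toLinearMap, toEuclideanLin.injective ?_,
    toEuclideanLin.injective ?_⟩
  · simp [toEuclideanLin_conjTranspose_eq_adjoint]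
  · ext x : 1
    simpa using (L.extend_apply ⟨f x, LinearMap.mem_range_self f x⟩).trans (hL₀ x) |>.symm

theorem exists_orthogonal_mul_eq_of_transpose_mul_self_eq {E F : Matrix m n ℝ}
    (h : Eᵀ * E = Fᵀ * F) : ∃ O : Matrix m m ℝ, Oᵀ * O = 1 ∧ E = O * F := by
  simpa only [conjTranspose_eq_transpose_of_trivial] using
    exists_unitary_mul_eq_of_conjTranspose_mul_self_eq (𝕜 := ℝ) (E := E) (F := F)
      (by simpa only [conjTranspose_eq_transpose_of_trivial] using h)

end Gram

theorem exists_orthogonal_transpose_mul_self_eq_sinh_sq {m n : Type*} [Fintype m] [Fintype n]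
    [DecidableEq n] (B : Matrix m n ℝ) :
    ∃ (V : Matrix n n ℝ) (θ : n → ℝ), Vᵀ * V = 1 ∧
      Bᵀ * B = Vᵀ * diagonal (fun l => Real.sinh (θ l) ^ 2) * V := by
  have hB : (Bᵀ * B).PosSemidef := by
    simpa only [conjTranspose_eq_transpose_of_trivial] using posSemidef_conjTranspose_mul_self B
  set U : Matrix n n ℝ := (hB.1.eigenvectorUnitary : Matrix n n ℝ)
  have hU : U * Uᵀ = 1 := by
    simpa [U, star_eq_conjTranspose] using hB.1.eigenvectorUnitary.2.2
  refine ⟨Uᵀ, fun l => Real.arsinh √(hB.1.eigenvalues l), by rwa [transpose_transpose], ?_⟩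
  refine hB.1.spectral_theorem.trans ?_
  simp [U, Unitary.conjStarAlgAut_apply, Real.sq_sqrt (hB.eigenvalues_nonneg _),
    star_eq_conjTranspose]

section Signature

variable {R : Type*} [CommRing R] {ι κ n : Type*} [Fintype ι] [DecidableEq ι] [Fintype κ]
  [DecidableEq κ]

theorem transpose_fromRows_mul_signature_mul_fromRows (X : Matrix ι n R) (Y : Matrix κ n R) :
    (fromRows X Y)ᵀ * (fromBlocks 1 0 0 (-1) : Matrix (ι ⊕ κ) (ι ⊕ κ) R) * fromRows X Y =
      Xᵀ * X - Yᵀ * Y := by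
  simp [transpose_fromRows, fromCols_mul_fromBlocks, fromCols_mul_fromRows, sub_eq_add_neg]

theorem mul_mul_transpose_eq_of_transpose_mul_mul_eq [Fintype n] [DecidableEq n]
    {J G : Matrix n n R} (hJ : J * J = 1) (hG : Gᵀ * J * G = J) : G * J * Gᵀ = J := by
  have h : G * (J * Gᵀ * J) = 1 := mul_eq_one_comm.mp <| by
    rw [Matrix.mul_assoc, Matrix.mul_assoc, ← Matrix.mul_assoc Gᵀ, hG, hJ]
  calc G * J * Gᵀ = G * (J * Gᵀ * J) * J := by simp only [Matrix.mul_assoc, hJ, Matrix.mul_one]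
    _ = J := by rw [h, Matrix.one_mul]

theorem transpose_toRows₁_mul_toRows₁_eq [Fintype n] {G K : Matrix (ι ⊕ κ) n R}
    {U : Matrix κ κ R}
    (hGK : Gᵀ * (fromBlocks 1 0 0 (-1) : Matrix (ι ⊕ κ) (ι ⊕ κ) R) * G =
      Kᵀ * (fromBlocks 1 0 0 (-1) : Matrix (ι ⊕ κ) (ι ⊕ κ) R) * K)
    (hU : Uᵀ * U = 1) (hbottom : G.toRows₂ = U * K.toRows₂) :
    G.toRows₁ᵀ * G.toRows₁ = K.toRows₁ᵀ * K.toRows₁ := by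
  rw [← fromRows_toRows G, ← fromRows_toRows K, transpose_fromRows_mul_signature_mul_fromRows,
    transpose_fromRows_mul_signature_mul_fromRows, hbottom, transpose_mul, Matrix.mul_assoc,
    ← Matrix.mul_assoc Uᵀ, hU, Matrix.one_mul] at hGK
  exact sub_left_injective hGK

theorem transpose_mul_mul_mul_eq [Fintype n] {J X Y : Matrix n n R} (hX : Xᵀ * J * X = J)
    (hY : Yᵀ * J * Y = J) : (X * Y)ᵀ * J * (X * Y) = J :=
  calc (X * Y)ᵀ * J * (X * Y) = Yᵀ * (Xᵀ * J * X) * Y := by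
        simp only [transpose_mul, Matrix.mul_assoc]
    _ = J := by rw [hX, hY]

theorem transpose_mul_self_eq_one_add_transpose_mul_self_of_fromBlocks {A : Matrix ι ι R}
    {B : Matrix ι κ R} {C : Matrix κ ι R} {D : Matrix κ κ R}
    (h : (fromBlocks A B C D)ᵀ * (fromBlocks 1 0 0 (-1) : Matrix (ι ⊕ κ) (ι ⊕ κ) R) *
      fromBlocks A B C D = fromBlocks 1 0 0 (-1)) :
    Dᵀ * D = 1 + Bᵀ * B := by
  have h₂₂ := congrArg toBlocks₂₂ h
  simp only [fromBlocks_transpose, fromBlocks_multiply, toBlocks_fromBlocks₂₂, Matrix.mul_one,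
    Matrix.mul_zero, Matrix.mul_neg, Matrix.neg_mul, add_zero, zero_add] at h₂₂
  rw [add_neg_eq_iff_eq_add.mp h₂₂, add_neg_cancel_left]

theorem transpose_fromBlocks_mul_signature_mul_fromBlocks {O : Matrix ι ι R} {O' : Matrix κ κ R}
    (hO : Oᵀ * O = 1) (hO' : O'ᵀ * O' = 1) :
    (fromBlocks O 0 0 O')ᵀ * (fromBlocks 1 0 0 (-1) : Matrix (ι ⊕ κ) (ι ⊕ κ) R) *
      fromBlocks O 0 0 O' = fromBlocks 1 0 0 (-1) := by
  simp [fromBlocks_transpose, fromBlocks_multiply, hO, hO']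

end Signature

section Hyperbolic

open Real

variable {κ : Type*} [Fintype κ] [DecidableEq κ] (ρ : Type*) [Fintype ρ]

noncomputable def sinhBlock (θ : κ → ℝ) : Matrix (κ ⊕ ρ) κ ℝ :=
  fromRows (diagonal fun l => sinh (θ l)) 0

variable {ρ}

theorem transpose_sinhBlock_mul_self (θ : κ → ℝ) :
    (sinhBlock ρ θ)ᵀ * sinhBlock ρ θ = diagonal fun l => sinh (θ l) ^ 2 := by
  simp [sinhBlock, transpose_fromRows, fromCols_mul_fromRows, sq]

theorem diagonal_cosh_mul_self (θ : κ → ℝ) :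
    (diagonal fun l => cosh (θ l)) * diagonal (fun l => cosh (θ l)) =
      1 + diagonal fun l => sinh (θ l) ^ 2 := by
  rw [diagonal_mul_diagonal, ← diagonal_one, diagonal_add]
  congr 1; funext l; rw [← sq, cosh_sq]; ring

variable (ρ) [DecidableEq ρ]

noncomputable def hyperbolicRotation (θ : κ → ℝ) : Matrix ((κ ⊕ ρ) ⊕ κ) ((κ ⊕ ρ) ⊕ κ) ℝ :=
  fromBlocks (fromBlocks (diagonal fun l => cosh (θ l)) 0 0 1) (sinhBlock ρ θ)
    (sinhBlock ρ θ)ᵀ (diagonal fun l => cosh (θ l))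

variable {ρ}

theorem transpose_hyperbolicRotation_mul_signature_mul_self (θ : κ → ℝ) :
    (hyperbolicRotation ρ θ)ᵀ * fromBlocks 1 0 0 (-1) * hyperbolicRotation ρ θ =
      fromBlocks 1 0 0 (-1) := by
  ext ((i | i) | i) ((j | j) | j) <;>
    simp [hyperbolicRotation, sinhBlock, Matrix.mul_apply, Fintype.sum_sum_type, diagonal_apply,
      one_apply] <;>
    split_ifs <;> subst_vars <;> simp [← sq, cosh_sq, mul_comm]

theorem exists_orthogonal_eq_sinhBlock_cosh {C : Matrix κ (κ ⊕ ρ) ℝ} {D V : Matrix κ κ ℝ}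
    {θ : κ → ℝ} (hV : Vᵀ * V = 1)
    (hD : Dᵀ * D = 1 + Vᵀ * diagonal (fun l => sinh (θ l) ^ 2) * V)
    (hDC : D * Dᵀ = 1 + C * Cᵀ) :
    ∃ (U : Matrix κ κ ℝ) (W : Matrix (κ ⊕ ρ) (κ ⊕ ρ) ℝ), Uᵀ * U = 1 ∧ Wᵀ * W = 1 ∧
      C = U * (sinhBlock ρ θ)ᵀ * W ∧ D = U * diagonal (fun l => cosh (θ l)) * V := by
  set Ch : Matrix κ κ ℝ := diagonal fun l => cosh (θ l)
  obtain ⟨U, hU, rfl⟩ : ∃ U : Matrix κ κ ℝ, Uᵀ * U = 1 ∧ D = U * (Ch * V) := by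
    refine exists_orthogonal_mul_eq_of_transpose_mul_self_eq ?_
    calc Dᵀ * D = Vᵀ * (1 + diagonal fun l => sinh (θ l) ^ 2) * V := by
          rw [hD, Matrix.mul_add, Matrix.add_mul, Matrix.mul_one, hV]
      _ = (Ch * V)ᵀ * (Ch * V) := by
          rw [← diagonal_cosh_mul_self]
          simp only [Ch, transpose_mul, diagonal_transpose, Matrix.mul_assoc]
  obtain ⟨W, hW, hC⟩ : ∃ W : Matrix (κ ⊕ ρ) (κ ⊕ ρ) ℝ, Wᵀ * W = 1 ∧
      Cᵀ = W * (sinhBlock ρ θ * Uᵀ) := by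
    refine exists_orthogonal_mul_eq_of_transpose_mul_self_eq ?_
    calc Cᵀᵀ * Cᵀ = U * (Ch * V) * (U * (Ch * V))ᵀ - 1 := by
          rw [transpose_transpose, hDC, add_sub_cancel_left]
      _ = U * (Ch * Ch - 1) * Uᵀ := by
          simp only [transpose_mul, diagonal_transpose, Matrix.mul_sub, Matrix.sub_mul,
            Matrix.mul_one, mul_eq_one_comm.mp hU, Matrix.mul_assoc, Ch]
          rw [← Matrix.mul_assoc V, mul_eq_one_comm.mp hV, Matrix.one_mul]
      _ = (sinhBlock ρ θ * Uᵀ)ᵀ * (sinhBlock ρ θ * Uᵀ) := by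
          rw [diagonal_cosh_mul_self, add_sub_cancel_left,
            ← transpose_sinhBlock_mul_self (ρ := ρ)]
          simp only [transpose_mul, transpose_transpose, Matrix.mul_assoc]
  refine ⟨U, Wᵀ, hU, by rw [transpose_transpose, mul_eq_one_comm, hW], ?_,
    by rw [Matrix.mul_assoc]⟩
  rw [← transpose_transpose C, hC]
  simp [transpose_mul, Matrix.mul_assoc]

theorem exists_hyperbolic_cs_decomposition
    (G : Matrix ((κ ⊕ ρ) ⊕ κ) ((κ ⊕ ρ) ⊕ κ) ℝ)
    (hG : Gᵀ * fromBlocks 1 0 0 (-1) * G = fromBlocks 1 0 0 (-1)) :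
    ∃ (Op Op' : Matrix (κ ⊕ ρ) (κ ⊕ ρ) ℝ) (Oq Oq' : Matrix κ κ ℝ) (θ : κ → ℝ),
      Opᵀ * Op = 1 ∧ Op'ᵀ * Op' = 1 ∧ Oqᵀ * Oq = 1 ∧ Oq'ᵀ * Oq' = 1 ∧
      G = fromBlocks Op 0 0 Oq * hyperbolicRotation ρ θ * fromBlocks Op' 0 0 Oq' := by
  obtain ⟨A, B, C, D, rfl⟩ : ∃ A B C D, G = fromBlocks A B C D :=
    ⟨_, _, _, _, (fromBlocks_toBlocks G).symm⟩
  have hJ : (fromBlocks 1 0 0 (-1) : Matrix ((κ ⊕ ρ) ⊕ κ) ((κ ⊕ ρ) ⊕ κ) ℝ) *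
      fromBlocks 1 0 0 (-1) = 1 := by
    simp [fromBlocks_multiply, ← fromBlocks_one]
  have hBD : Dᵀ * D = 1 + Bᵀ * B :=
    transpose_mul_self_eq_one_add_transpose_mul_self_of_fromBlocks hG
  have hdual : (fromBlocks Aᵀ Cᵀ Bᵀ Dᵀ)ᵀ * fromBlocks 1 0 0 (-1) * fromBlocks Aᵀ Cᵀ Bᵀ Dᵀ =
      fromBlocks 1 0 0 (-1) := by
    simpa [fromBlocks_transpose] using mul_mul_transpose_eq_of_transpose_mul_mul_eq hJ hG
  have hDC : D * Dᵀ = 1 + C * Cᵀ := by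
    simpa using transpose_mul_self_eq_one_add_transpose_mul_self_of_fromBlocks hdual
  obtain ⟨V, θ, hV, hB⟩ := exists_orthogonal_transpose_mul_self_eq_sinh_sq B
  obtain ⟨U, W, hU, hW, hC, hD⟩ :=
    exists_orthogonal_eq_sinhBlock_cosh (ρ := ρ) hV (hBD.trans (by rw [hB])) hDC
  set K := hyperbolicRotation ρ θ * fromBlocks W 0 0 V
  have hbottom : (fromBlocks A B C D).toRows₂ = U * K.toRows₂ := by
    simp only [K, hyperbolicRotation, fromBlocks_multiply, Matrix.mul_zero, add_zero,
      zero_add]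
    simp only [← fromRows_fromCols_eq_fromBlocks, toRows₂_fromRows, mul_fromCols, hC, hD,
      Matrix.mul_assoc]
  have hK : Kᵀ * fromBlocks 1 0 0 (-1) * K = fromBlocks 1 0 0 (-1) :=
    transpose_mul_mul_mul_eq (transpose_hyperbolicRotation_mul_signature_mul_self θ)
      (transpose_fromBlocks_mul_signature_mul_fromBlocks hW hV)
  obtain ⟨O, hO, htop⟩ := exists_orthogonal_mul_eq_of_transpose_mul_self_eq
    (transpose_toRows₁_mul_toRows₁_eq (hG.trans hK.symm) hU hbottom)
  refine ⟨O, W, U, V, θ, hO, hW, hU, hV, ?_⟩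
  calc fromBlocks A B C D = fromRows (O * K.toRows₁) (U * K.toRows₂) := by
        rw [← htop, ← hbottom, fromRows_toRows]
    _ = fromBlocks O 0 0 U * fromRows K.toRows₁ K.toRows₂ := by
        rw [fromBlocks_mul_fromRows]; simp
    _ = _ := by rw [fromRows_toRows, Matrix.mul_assoc]

end Hyperbolic

end Matrix

theorem hyperbolic_cs_decomposition (p q : ℕ)
    (G : Matrix ((Fin q ⊕ Fin (p - q)) ⊕ Fin q) ((Fin q ⊕ Fin (p - q)) ⊕ Fin q) ℝ)
    (hG : Gᵀ * Matrix.fromBlocks 1 0 0 (-1) * G = Matrix.fromBlocks 1 0 0 (-1)) :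
    ∃ (Op Op' : Matrix (Fin q ⊕ Fin (p - q)) (Fin q ⊕ Fin (p - q)) ℝ)
      (Oq Oq' : Matrix (Fin q) (Fin q) ℝ) (θ : Fin q → ℝ),
      Opᵀ * Op = 1 ∧ Op'ᵀ * Op' = 1 ∧ Oqᵀ * Oq = 1 ∧ Oq'ᵀ * Oq' = 1 ∧
      G = Matrix.fromBlocks Op 0 0 Oq *
          Matrix.fromBlocks
            (Matrix.fromBlocks (Matrix.diagonal fun l => Real.cosh (θ l)) 0 0 1)
            (Matrix.of fun i j => match i with
              | Sum.inl i' => if i' = j then Real.sinh (θ j) else 0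
              | Sum.inr _ => 0)
            (Matrix.of fun i j => match j with
              | Sum.inl j' => if i = j' then Real.sinh (θ i) else 0
              | Sum.inr _ => 0)
            (Matrix.diagonal fun l => Real.cosh (θ l)) *
          Matrix.fromBlocks Op' 0 0 Oq' := by
  obtain ⟨Op, Op', Oq, Oq', θ, hOp, hOp', hOq, hOq', rfl⟩ :=
    exists_hyperbolic_cs_decomposition G hG
  refine ⟨Op, Op', Oq, Oq', θ, hOp, hOp', hOq, hOq', ?_⟩
  rw [hyperbolicRotation]
  congr 3
  · ext (i | i) j
    · by_cases h : i = j <;> simp [sinhBlock, h]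
    · simp [sinhBlock]
  · ext i (j | j)
    · by_cases h : i = j <;> simp [sinhBlock, h, eq_comm]
    · simp [sinhBlock]
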